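/- Let R be the binary relation on ℕ with m R n iff m ≠ n+1. Then: (a) for all m,n ∈ ℕ there is k with m R k and k R n (so (ℕ,R) is a single cluster); (b) R satisfies RP_2; (c) defining sets A_n ⊆ ℕ by A_0 = {0} and A_{n+1} = {m : ∀k, m R k → k ∉ A_n}, one has A_n = {n} for every n ∈ ℕ (so the sets A_n are pairwise distinct). -/
import Mathlib


/-- `RP R m` : every `R`-path `x 0 R x 1 R … R x (m+1)` has a repeated point or a shortcut
`x i R x (j+1)` with `i < j ≤ m`. -/
def RP {X : Type*} (R : X → X → Prop) (m : ℕ) : Prop :=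
  ∀ x : ℕ → X, (∀ i ≤ m, R (x i) (x (i + 1))) →
    (∃ i j, i < j ∧ j ≤ m + 1 ∧ x i = x j) ∨
      (∃ i j, i < j ∧ j ≤ m ∧ R (x i) (x (j + 1)))

/-- The truth sets of the formulas `φ_0 = p`, `φ_{n+1} = ¬◇φ_n` in the frame `(ℕ, R)`,
`m R n ↔ m ≠ n + 1`, under the valuation `p ↦ {0}`:
`A 0 = {0}`, `A (n+1) = {m | ∀ k, m R k → k ∉ A n}`. -/
def Aset : ℕ → Set ℕ
  | 0 => {0}
  | n + 1 => {m | ∀ k, m ≠ k + 1 → k ∉ Aset n}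

/-- For the relation `R` on `ℕ` given by `m R n ↔ m ≠ n + 1`:
(a) `(ℕ, R)` is a single cluster (any two points are `R²`-related);
(b) `R` satisfies `RP₂`;
(c) `Aset n = {n}` for every `n` (so the sets `Aset n` are pairwise distinct). -/
theorem stmt8 :
    (∀ m n : ℕ, ∃ k, m ≠ k + 1 ∧ k ≠ n + 1) ∧
    RP (fun m n : ℕ => m ≠ n + 1) 2 ∧
    (∀ n : ℕ, Aset n = {n}) := by
  refine ⟨fun m n => ⟨m + n + 5, by omega, by omega⟩, ?_, ?_⟩
  · intro x h
    by_cases h02 : x 0 ≠ x 2 + 1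
    · exact Or.inr ⟨0, 1, by omega, by omega, h02⟩
    by_cases h03 : x 0 ≠ x 3 + 1
    · exact Or.inr ⟨0, 2, by omega, by omega, h03⟩
    by_cases h13 : x 1 ≠ x 3 + 1
    · exact Or.inr ⟨1, 2, by omega, by omega, h13⟩
    · exact Or.inl ⟨0, 1, by omega, by omega, by omega⟩
  · intro n
    induction n with
    | zero => rfl
    | succ n ih =>
      ext m
      simp only [Aset, ih, Set.mem_setOf_eq, Set.mem_singleton_iff]
      constructor
      · intro h
        by_contra hm
        exact h n (by omega) rfl
      · intro h k hk hkn
        subst hkn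
        omega
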